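/- arXiv:1501.01833 — 2 statements merged into one kernel-verified Lean document; each statement's English description precedes it below -/
import Mathlib

section
/- For any cycle C_n with n ≥ 3, the 1-limited packing number equals ⌊n/3⌋. -/
/-- The closed neighbourhood `N[v] = {v} ∪ N(v)` of a vertex `v`. -/
def SimpleGraph.closedNbhd {V : Type*} (G : SimpleGraph V) (v : V) : Set V :=
  insert v (G.neighborSet v)

/-- A set `X ⊆ V(G)` is a `k`-limited packing if `|N[v] ∩ X| ≤ k` for every vertex `v`. -/
def SimpleGraph.IsLimitedPacking {V : Type*} (G : SimpleGraph V) (k : ℕ) (X : Set V) : Prop :=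
  ∀ v : V, (X ∩ G.closedNbhd v).ncard ≤ k

/-- `L_k(G)`: the maximum cardinality of a `k`-limited packing in `G`. -/
noncomputable def SimpleGraph.limitedPackingNumber {V : Type*} (G : SimpleGraph V) (k : ℕ) : ℕ :=
  sSup {n | ∃ X : Set V, G.IsLimitedPacking k X ∧ X.ncard = n}

/-!
A 1-limited packing `X` of `C_n` meets every closed neighbourhood at most once, and every closed
neighbourhood has three vertices, so counting the pairs `(x, v)` with `x ∈ X ∩ N[v]` gives
`3 |X| ≤ n`; in any finite graph the same count gives `(δ + 1) |X| ≤ k |V|`. Conversely the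
vertices `0, 3, …, 3 (⌊n/3⌋ - 1)` have pairwise disjoint closed neighbourhoods.
-/

open Finset
open scoped Fin.NatCast Fin.CommRing

namespace SimpleGraph

variable {V : Type*} (G : SimpleGraph V)

theorem mem_closedNbhd_comm {u v : V} : u ∈ G.closedNbhd v ↔ v ∈ G.closedNbhd u := by
  simp only [closedNbhd, Set.mem_insert_iff, mem_neighborSet, eq_comm (a := u), G.adj_comm]

theorem ncard_closedNbhd (v : V) [Fintype (G.neighborSet v)] :
    (G.closedNbhd v).ncard = G.degree v + 1 := by
  rw [closedNbhd, Set.ncard_insert_of_notMem G.notMem_neighborSet_self,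
    Set.ncard_eq_toFinset_card', Set.toFinset_card, card_neighborSet_eq_degree]

theorem limitedPackingNumber_eq {k a : ℕ} (hX : ∃ X, G.IsLimitedPacking k X ∧ X.ncard = a)
    (hle : ∀ X, G.IsLimitedPacking k X → X.ncard ≤ a) : G.limitedPackingNumber k = a := by
  refine IsGreatest.csSup_eq ⟨hX, ?_⟩
  rintro _ ⟨X, hX, rfl⟩
  exact hle X hX

theorem IsLimitedPacking.ncard_mul_le [Fintype V] [DecidableRel G.Adj] {k : ℕ} {X : Set V}
    (hX : G.IsLimitedPacking k X) : X.ncard * (G.minDegree + 1) ≤ Fintype.card V * k := by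
  classical
  have hcount := card_nsmul_le_card_nsmul (R := ℕ) (s := X.toFinset) (t := univ)
    (fun x v => x ∈ G.closedNbhd v) (m := G.minDegree + 1) (n := k) ?_ ?_
  · simpa only [smul_eq_mul, card_univ, ← Set.ncard_eq_toFinset_card'] using hcount
  · intro x _
    simp only [bipartiteAbove, G.mem_closedNbhd_comm (u := x)]
    rw [← Set.ncard_coe_finset, coe_filter_univ, Set.ofPred_mem_eq, ncard_closedNbhd]
    exact Nat.succ_le_succ (G.minDegree_le_degree x)
  · intro v _
    rw [Nat.cast_id, ← Set.ncard_coe_finset, bipartiteBelow, coe_filter]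
    simp only [Set.mem_toFinset]
    exact hX v

theorem cycleGraph_closedNbhd {n : ℕ} (v : Fin (n + 2)) :
    (cycleGraph (n + 2)).closedNbhd v = {v - 1, v, v + 1} := by
  rw [closedNbhd, cycleGraph_neighborSet, Set.insert_comm]

theorem cycleGraph_minDegree (n : ℕ) : (cycleGraph (n + 3)).minDegree = 2 :=
  IsRegularOfDegree.minDegree_eq (G := cycleGraph (n + 3)) fun _ => cycleGraph_degree_three_le

theorem exists_add_eq_add_one_of_mem_cycleGraph_closedNbhd {n : ℕ} {u v : Fin (n + 2)}
    (h : u ∈ (cycleGraph (n + 2)).closedNbhd v) :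
    ∃ p : ℕ, p ≤ 2 ∧ u + (p : Fin (n + 2)) = v + 1 := by
  rw [cycleGraph_closedNbhd] at h
  rcases h with rfl | rfl | rfl
  · exact ⟨2, le_rfl, by push_cast; ring⟩
  · exact ⟨1, one_le_two, by push_cast; ring⟩
  · exact ⟨0, zero_le_two, by push_cast; ring⟩

theorem IsLimitedPacking.ncard_le_cycleGraph {n : ℕ} {X : Set (Fin (n + 3))}
    (hX : (cycleGraph (n + 3)).IsLimitedPacking 1 X) : X.ncard ≤ (n + 3) / 3 := by
  have h := hX.ncard_mul_le
  rw [cycleGraph_minDegree, Fintype.card_fin] at h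
  omega

def cycleEveryThird (n : ℕ) : Finset (Fin (n + 2)) :=
  (range ((n + 2) / 3)).image fun i => ((3 * i : ℕ) : Fin (n + 2))

theorem card_cycleEveryThird (n : ℕ) : (cycleEveryThird n).card = (n + 2) / 3 := by
  refine (card_image_of_injOn fun i hi j hj hij => ?_).trans (card_range _)
  simp only [coe_range, Set.mem_Iio] at hi hj
  have := congrArg Fin.val hij
  rw [Fin.val_cast_of_lt (by omega), Fin.val_cast_of_lt (by omega)] at this
  omega

theorem isLimitedPacking_cycleEveryThird (n : ℕ) :
    (cycleGraph (n + 2)).IsLimitedPacking 1 (cycleEveryThird n) := by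
  intro v
  rw [Set.ncard_le_one]
  rintro _ ⟨hx, hxv⟩ _ ⟨hy, hyv⟩
  simp only [cycleEveryThird, coe_image, coe_range, Set.mem_image, Set.mem_Iio] at hx hy
  obtain ⟨i, hi, rfl⟩ := hx
  obtain ⟨j, hj, rfl⟩ := hy
  obtain ⟨p, hp, hpv⟩ := exists_add_eq_add_one_of_mem_cycleGraph_closedNbhd hxv
  obtain ⟨q, hq, hqv⟩ := exists_add_eq_add_one_of_mem_cycleGraph_closedNbhd hyv
  rw [← Nat.cast_add] at hpv hqv
  -- `3 i + p < n + 2`, so the casts to `Fin (n + 2)` do not wrap around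
  have := congrArg Fin.val (hpv.trans hqv.symm)
  rw [Fin.val_cast_of_lt (by omega), Fin.val_cast_of_lt (by omega)] at this
  rw [show i = j by omega]

end SimpleGraph

/-- For any cycle `C_n` with `n ≥ 3`, the 1-limited packing number equals `⌊n/3⌋`. -/
theorem stmt0 (n : ℕ) (hn : 3 ≤ n) :
    (SimpleGraph.cycleGraph n).limitedPackingNumber 1 = n / 3 := by
  obtain ⟨m, rfl⟩ : ∃ m, n = m + 3 := ⟨n - 3, by omega⟩
  refine SimpleGraph.limitedPackingNumber_eq _
    ⟨_, SimpleGraph.isLimitedPacking_cycleEveryThird (m + 1), ?_⟩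
    fun X hX => hX.ncard_le_cycleGraph
  rw [Set.ncard_coe_finset, SimpleGraph.card_cycleEveryThird]
end

section
/- Let q be a prime power and k ≥ 1, and let G_{q,k} be the graph whose vertices are the points of the projective space PG(k+1, q) (equivalence classes of nonzero vectors in GF(q)^{k+2} under scalar multiplication), with two vertices adjacent if representative vectors have inner product 0. Then any set of k+1 vertices of G_{q,k} fails to be a k-limited packing; consequently L_k(G_{q,k}) = k. -/
/-- The graph `G_{q,k}` on the points of the projective space `PG(k+1, q)`
(one-dimensional subspaces of `GF(q)^{k+2}`), where two points are adjacent
when representative vectors have inner product `0`. -/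
noncomputable def projOrthGraph (F : Type*) [Field F] (k : ℕ) :
    SimpleGraph (Projectivization F (Fin (k + 2) → F)) :=
  SimpleGraph.fromRel (fun x y => ∑ i, x.rep i * y.rep i = 0)

/-!
Any `k + 1` points of `PG(k+1, q)` satisfy `k + 1 < k + 2` homogeneous linear equations, so some
nonzero vector is orthogonal to all of them; the point `v` it spans has all of them in `N[v]`.
Conversely any `k` points form a `k`-limited packing, and `PG(k+1, q)` has at least `k` points
(the coordinate points).
-/

open Matrix

namespace SimpleGraph

variable {V : Type*} {G : SimpleGraph V} {k : ℕ} {X Y : Set V}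

lemma IsLimitedPacking.subset (hX : G.IsLimitedPacking k X) (hXfin : X.Finite) (hYX : Y ⊆ X) :
    G.IsLimitedPacking k Y := fun v =>
  (Set.ncard_le_ncard (Set.inter_subset_inter_left _ hYX) (hXfin.inter_of_left _)).trans (hX v)

lemma isLimitedPacking_of_ncard_le (hXfin : X.Finite) (hX : X.ncard ≤ k) :
    G.IsLimitedPacking k X := fun _ =>
  (Set.ncard_le_ncard Set.inter_subset_left hXfin).trans hX

lemma not_isLimitedPacking_of_subset_closedNbhd {v : V} (hXv : X ⊆ G.closedNbhd v)
    (hX : X.ncard = k + 1) : ¬ G.IsLimitedPacking k X := fun h => by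
  have := h v
  rw [Set.inter_eq_self_of_subset_left hXv, hX] at this
  omega

lemma limitedPackingNumber_eq_of_not_isLimitedPacking (f : Fin k ↪ V)
    (h : ∀ X : Set V, X.ncard = k + 1 → ¬ G.IsLimitedPacking k X) :
    G.limitedPackingNumber k = k := by
  have hmem : k ∈ {n | ∃ X, G.IsLimitedPacking k X ∧ X.ncard = n} := by
    have hcard : (Set.range f).ncard = k := by
      rw [Set.ncard_range_of_injective f.injective, Nat.card_fin]
    exact ⟨_, isLimitedPacking_of_ncard_le (Set.finite_range f) hcard.le, hcard⟩
  have hub : ∀ n ∈ {n | ∃ X, G.IsLimitedPacking k X ∧ X.ncard = n}, n ≤ k := by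
    rintro _ ⟨X, hX, rfl⟩
    by_contra! hlt
    obtain ⟨Y, hYX, hY⟩ := Set.exists_subset_card_eq hlt
    exact h Y hY (hX.subset (Set.finite_of_ncard_pos (by omega)) hYX)
  exact le_antisymm (csSup_le ⟨k, hmem⟩ hub) (le_csSup ⟨k, hub⟩ hmem)

end SimpleGraph

lemma Matrix.exists_mulVec_eq_zero_of_card_lt {F m n : Type*} [Field F] [Fintype m] [Fintype n]
    (M : Matrix m n F) (h : Fintype.card m < Fintype.card n) : ∃ v ≠ 0, M *ᵥ v = 0 := by
  have hker := LinearMap.ker_ne_bot_of_finrank_lt (f := M.mulVecLin) (by simpa using h)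
  obtain ⟨v, hv, hv0⟩ := (Submodule.ne_bot_iff _).mp hker
  exact ⟨v, hv0, hv⟩

lemma Projectivization.mk_single_injective (F : Type*) [Field F] (n : Type*) [DecidableEq n] :
    Function.Injective fun i : n => mk F (Pi.single i (1 : F)) (by simp) := by
  intro i j hij
  obtain ⟨a, ha⟩ := (mk_eq_mk_iff F _ _ _ _).mp hij
  by_contra hne
  simpa [Pi.single_eq_of_ne hne] using congrFun ha i

open Projectivization

section

variable {F : Type*} [Field F] {k : ℕ}

lemma mem_closedNbhd_projOrthGraph_of_dotProduct_eq_zero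
    {x v : Projectivization F (Fin (k + 2) → F)} (h : x.rep ⬝ᵥ v.rep = 0) :
    x ∈ (projOrthGraph F k).closedNbhd v := by
  rcases eq_or_ne x v with rfl | hxv
  · exact Set.mem_insert _ _
  · exact Set.mem_insert_of_mem _ ⟨hxv.symm, Or.inr h⟩

lemma exists_subset_closedNbhd_projOrthGraph (X : Set (Projectivization F (Fin (k + 2) → F)))
    (hXfin : X.Finite) (hX : X.ncard ≤ k + 1) :
    ∃ v, X ⊆ (projOrthGraph F k).closedNbhd v := by
  have := hXfin.fintype
  obtain ⟨w, hw, hXw⟩ := Matrix.exists_mulVec_eq_zero_of_card_lt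
    (Matrix.of fun x : X => x.1.rep) (by
      rw [Fintype.card_fin, ← Nat.card_eq_fintype_card, Nat.card_coe_set_eq]; omega)
  obtain ⟨a, ha⟩ := exists_smul_eq_mk_rep F w hw
  refine ⟨mk F w hw, fun x hx => mem_closedNbhd_projOrthGraph_of_dotProduct_eq_zero ?_⟩
  rw [← ha, dotProduct_smul, show x.rep ⬝ᵥ w = 0 from congrFun hXw ⟨x, hx⟩, smul_zero]

end

theorem stmt15_general (F : Type*) [Field F] (k : ℕ) :
    (∀ X : Set (Projectivization F (Fin (k + 2) → F)),
        X.ncard = k + 1 → ¬ (projOrthGraph F k).IsLimitedPacking k X) ∧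
      (projOrthGraph F k).limitedPackingNumber k = k := by
  have not_packing : ∀ X : Set (Projectivization F (Fin (k + 2) → F)),
      X.ncard = k + 1 → ¬ (projOrthGraph F k).IsLimitedPacking k X := by
    intro X hX
    obtain ⟨v, hXv⟩ := exists_subset_closedNbhd_projOrthGraph X
      (Set.finite_of_ncard_pos (by omega)) hX.le
    exact SimpleGraph.not_isLimitedPacking_of_subset_closedNbhd hXv hX
  refine ⟨not_packing, SimpleGraph.limitedPackingNumber_eq_of_not_isLimitedPacking ?_ not_packing⟩
  exact (Fin.castLEEmb (by omega)).trans ⟨_, mk_single_injective F (Fin (k + 2))⟩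

/-- Any `k+1` vertices of `G_{q,k}` fail to be a `k`-limited packing;
consequently `L_k(G_{q,k}) = k`. -/
theorem stmt15 (F : Type*) [Field F] [Fintype F] (k : ℕ) (hk : 1 ≤ k) :
    (∀ X : Set (Projectivization F (Fin (k + 2) → F)),
        X.ncard = k + 1 → ¬ (projOrthGraph F k).IsLimitedPacking k X) ∧
      (projOrthGraph F k).limitedPackingNumber k = k :=
  stmt15_general F k
end
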